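/- (Main theorem) Let N be a finite set with |N| ≥ 2 and let S be a set of enumerations of N. Then S is geodetically convex in the permutohedral graph if and only if either S = ∅ or S = L(P) for some poset P on N. -/

import Mathlib

/-- An *enumeration* of a finite set `N`: a bijection `π` from `{1,…,n}` (modeled as
`Fin (Fintype.card N)`) onto `N`. -/
abbrev Enum (N : Type*) [Fintype N] := Fin (Fintype.card N) ≃ N

/-- `P ⊆ N × N` is a *poset on `N`*: a reflexive, antisymmetric and transitive relation. -/
def IsPosetOn {N : Type*} (P : Set (N × N)) : Prop :=
  (∀ u : N, (u, u) ∈ P) ∧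
  (∀ u v : N, (u, v) ∈ P → (v, u) ∈ P → u = v) ∧
  (∀ u v w : N, (u, v) ∈ P → (v, w) ∈ P → (u, w) ∈ P)

/-- The diagonal `Δ = {(u,u) : u ∈ N}`. -/
def diag (N : Type*) : Set (N × N) := {p | p.1 = p.2}

/-- The set `L(T)` of *linear extensions* of a relation `T ⊆ N × N`:
enumerations `π` with `π⁻¹(u) ≤ π⁻¹(v)` for all `(u,v) ∈ T`. -/
def LinExt {N : Type*} [Fintype N] (T : Set (N × N)) : Set (Enum N) :=
  {π | ∀ p ∈ T, π.symm p.1 ≤ π.symm p.2}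

/-- `π` and `σ` differ by the adjacent transposition at positions `i, i+1`. -/
def AdjTranspAt {N : Type*} [Fintype N] (π σ : Enum N) (i : Fin (Fintype.card N))
    (h : (i : ℕ) + 1 < Fintype.card N) : Prop :=
  π i = σ ⟨(i : ℕ) + 1, h⟩ ∧ π ⟨(i : ℕ) + 1, h⟩ = σ i ∧
  ∀ k : Fin (Fintype.card N), k ≠ i → k ≠ ⟨(i : ℕ) + 1, h⟩ → π k = σ k

/-- `π` and `σ` differ by an adjacent transposition. -/
def AdjTransp {N : Type*} [Fintype N] (π σ : Enum N) : Prop :=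
  ∃ i h, AdjTranspAt π σ i h

/-- The *permutohedral graph* over `N`: nodes are the enumerations of `N`, and edges join
enumerations differing by an adjacent transposition. -/
def permGraph (N : Type*) [Fintype N] : SimpleGraph (Enum N) where
  Adj π σ := AdjTransp π σ
  symm := by
    constructor
    rintro π σ ⟨i, h, h1, h2, h3⟩
    exact ⟨i, h, h2.symm, h1.symm, fun k hk hk' => (h3 k hk hk').symm⟩
  loopless := by
    constructor
    rintro π ⟨i, h, h1, -, -⟩
    have hi : i = ⟨(i : ℕ) + 1, h⟩ := π.injective h1
    have : (i : ℕ) = (i : ℕ) + 1 := congrArg Fin.val hi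
    omega

/-- `π` and `σ` are joined by an edge of the permutohedral graph labeled by `{u,v}`,
i.e. they differ by the adjacent transposition at some `i` with `{π(i), π(i+1)} = {u,v}`. -/
def AdjLabeled {N : Type*} [Fintype N] (π σ : Enum N) (u v : N) : Prop :=
  ∃ i h, AdjTranspAt π σ i h ∧ ({π i, π ⟨(i : ℕ) + 1, h⟩} : Set N) = {u, v}

/-- `Inv[π,σ]`: the set of *inversions* between enumerations `π` and `σ`, i.e. two-element
sets `{u,v} ⊆ N` whose elements occur in opposite mutual order in `π` and `σ`. -/
def InvBetween {N : Type*} [Fintype N] (π σ : Enum N) : Set (Set N) :=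
  {L | ∃ u v : N, L = {u, v} ∧ π.symm u < π.symm v ∧ σ.symm v < σ.symm u}

/-- `Inv(S)`: the set of *inversions within* a set `S` of enumerations: two-element sets
`{u,v} ⊆ N` labeling some edge of the permutohedral graph with both endpoints in `S`. -/
def InvS {N : Type*} [Fintype N] (S : Set (Enum N)) : Set (Set N) :=
  {L | ∃ u v : N, u ≠ v ∧ L = {u, v} ∧ ∃ π ∈ S, ∃ σ ∈ S, AdjLabeled π σ u v}

/-- `Cov(S)`: the *covering relation* for a set `S` of enumerations: pairs `(u,v)` such that
some edge labeled `{u,v}` joins `π ∈ S` with `σ ∉ S` and `u` strictly precedes `v` in `π`. -/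
def CovS {N : Type*} [Fintype N] (S : Set (Enum N)) : Set (N × N) :=
  {p | ∃ π ∈ S, ∃ σ, σ ∉ S ∧ AdjLabeled π σ p.1 p.2 ∧ π.symm p.1 < π.symm p.2}

/-- The transitive closure `tr(R)` of a relation `R ⊆ N × N`. -/
def trCl {N : Type*} (R : Set (N × N)) : Set (N × N) :=
  {p | Relation.TransGen (fun a b => (a, b) ∈ R) p.1 p.2}

/-- `R` is acyclic: no cycle `u_1, …, u_k = u_1` (`k ≥ 2`) with consecutive pairs in `R`;
equivalently, no `u` with `(u,u)` in the transitive closure of `R`. -/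
def Acyclic {N : Type*} (R : Set (N × N)) : Prop :=
  ∀ u : N, ¬ Relation.TransGen (fun a b => (a, b) ∈ R) u u

/-- A set `S` of nodes of the permutohedral graph is *geodetically convex* if for all
`π, σ ∈ S`, every node `τ` lying on a geodesic between `π` and `σ` belongs to `S`. -/
def GeodConvex {N : Type*} [Fintype N] (S : Set (Enum N)) : Prop :=
  ∀ π ∈ S, ∀ σ ∈ S, ∀ τ : Enum N,
    (permGraph N).dist π τ + (permGraph N).dist τ σ = (permGraph N).dist π σ → τ ∈ S

/-- The *label* on an edge of the permutohedral graph: the (two-element) set of elements of `N`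
whose positions differ in the two endpoint enumerations; for an edge given by the adjacent
transposition at `i` this is exactly `{π(i), π(i+1)}`. -/
def edgeLabel {N : Type*} [Fintype N] : Sym2 (Enum N) → Set N :=
  Sym2.lift ⟨fun π σ => {u | π.symm u ≠ σ.symm u}, fun π σ => by
    ext u; simp [ne_comm]⟩

/-- The total order `T_π` on `N` associated with an enumeration `π`. -/
def Tord {N : Type*} [Fintype N] (π : Enum N) : Set (N × N) :=
  {p | π.symm p.1 ≤ π.symm p.2}

section Aux

open scoped Classical

variable {N : Type*} [Fintype N]

open Finset

lemma lt_mk_succ {n : ℕ} (i : Fin n) (h : (i : ℕ) + 1 < n) : i < ⟨(i : ℕ) + 1, h⟩ := by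
  rw [Fin.lt_def]; exact Nat.lt_succ_self _

/-- The finset of (ordered) inversions between two enumerations. -/
noncomputable def invP (π σ : Enum N) : Finset (N × N) :=
  Finset.univ.filter (fun p => π.symm p.1 < π.symm p.2 ∧ σ.symm p.2 < σ.symm p.1)

lemma mem_invP {π σ : Enum N} {p : N × N} :
    p ∈ invP π σ ↔ π.symm p.1 < π.symm p.2 ∧ σ.symm p.2 < σ.symm p.1 := by
  simp [invP]

lemma invP_self (π : Enum N) : invP π π = ∅ := by
  ext p; simp only [mem_invP, Finset.notMem_empty, iff_false]
  rintro ⟨h1, h2⟩; exact absurd (h1.trans h2) (lt_irrefl _)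

/-- Swapping two adjacent positions preserves the order of any other pair. -/
lemma swap_lt_swap_iff {n : ℕ} (i : Fin n) (h : (i : ℕ) + 1 < n) (x y : Fin n)
    (hxy1 : ¬(x = i ∧ y = ⟨(i : ℕ) + 1, h⟩)) (hxy2 : ¬(x = ⟨(i : ℕ) + 1, h⟩ ∧ y = i)) :
    Equiv.swap i ⟨(i : ℕ) + 1, h⟩ x < Equiv.swap i ⟨(i : ℕ) + 1, h⟩ y ↔ x < y := by
  have key : ∀ z : Fin n, ((Equiv.swap i ⟨(i : ℕ) + 1, h⟩ z : Fin n) : ℕ) =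
      if (z : ℕ) = (i : ℕ) then (i : ℕ) + 1
      else if (z : ℕ) = (i : ℕ) + 1 then (i : ℕ) else (z : ℕ) := by
    intro z
    rcases eq_or_ne z i with rfl | hz1
    · simp [Equiv.swap_apply_left]
    · rcases eq_or_ne z ⟨(i : ℕ) + 1, h⟩ with rfl | hz2
      · rw [Equiv.swap_apply_right]
        have hne : ((⟨(i : ℕ) + 1, h⟩ : Fin n) : ℕ) ≠ (i : ℕ) := by
          simp
        rw [if_neg hne, if_pos rfl]
      · have hn1 : (z : ℕ) ≠ (i : ℕ) := fun hc => hz1 (Fin.ext hc)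
        have hn2 : (z : ℕ) ≠ (i : ℕ) + 1 := fun hc => hz2 (Fin.ext hc)
        rw [Equiv.swap_apply_of_ne_of_ne hz1 hz2, if_neg hn1, if_neg hn2]
  have hv1 : ¬((x : ℕ) = (i : ℕ) ∧ (y : ℕ) = (i : ℕ) + 1) :=
    fun ⟨a, b⟩ => hxy1 ⟨Fin.ext a, Fin.ext b⟩
  have hv2 : ¬((x : ℕ) = (i : ℕ) + 1 ∧ (y : ℕ) = (i : ℕ)) :=
    fun ⟨a, b⟩ => hxy2 ⟨Fin.ext a, Fin.ext b⟩
  have hx := x.isLt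
  have hy := y.isLt
  rw [Fin.lt_def, Fin.lt_def, key x, key y]
  split_ifs <;> omega

lemma adj_eq_swap {π σ : Enum N} {i : Fin (Fintype.card N)} {h : (i : ℕ) + 1 < Fintype.card N}
    (hA : AdjTranspAt π σ i h) : σ = (Equiv.swap i ⟨(i : ℕ) + 1, h⟩).trans π := by
  obtain ⟨h1, h2, h3⟩ := hA
  ext x
  rcases eq_or_ne x i with rfl | hxi
  · simp [Equiv.swap_apply_left, h2]
  rcases eq_or_ne x ⟨(i : ℕ) + 1, h⟩ with rfl | hxi1
  · simp [Equiv.swap_apply_right, h1]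
  · simp [Equiv.swap_apply_of_ne_of_ne hxi hxi1, h3 x hxi hxi1]

lemma adj_symm_apply {π σ : Enum N} {i : Fin (Fintype.card N)} {h : (i : ℕ) + 1 < Fintype.card N}
    (hA : AdjTranspAt π σ i h) (u : N) :
    σ.symm u = Equiv.swap i ⟨(i : ℕ) + 1, h⟩ (π.symm u) := by
  rw [adj_eq_swap hA]; simp

lemma adj_mem_iff {π σ τ : Enum N} {i : Fin (Fintype.card N)} {h : (i : ℕ) + 1 < Fintype.card N}
    (hA : AdjTranspAt π σ i h) {p : N × N}
    (h1 : p ≠ (π i, π ⟨(i : ℕ) + 1, h⟩)) (h2 : p ≠ (π ⟨(i : ℕ) + 1, h⟩, π i)) :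
    (p ∈ invP σ τ ↔ p ∈ invP π τ) := by
  have key : σ.symm p.1 < σ.symm p.2 ↔ π.symm p.1 < π.symm p.2 := by
    rw [adj_symm_apply hA, adj_symm_apply hA]
    apply swap_lt_swap_iff
    · rintro ⟨ha, hb⟩
      refine h1 (Prod.ext_iff.mpr ⟨?_, ?_⟩)
      · simpa using congrArg π ha
      · simpa using congrArg π hb
    · rintro ⟨ha, hb⟩
      refine h2 (Prod.ext_iff.mpr ⟨?_, ?_⟩)
      · simpa using congrArg π ha
      · simpa using congrArg π hb
  simp only [mem_invP, key]

lemma adj_uv_not_mem {π σ τ : Enum N} {i : Fin (Fintype.card N)}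
    {h : (i : ℕ) + 1 < Fintype.card N} (hA : AdjTranspAt π σ i h) :
    (π i, π ⟨(i : ℕ) + 1, h⟩) ∉ invP σ τ := by
  rw [mem_invP]
  rintro ⟨hc, -⟩
  rw [adj_symm_apply hA, adj_symm_apply hA] at hc
  simp only [Equiv.symm_apply_apply, Equiv.swap_apply_left, Equiv.swap_apply_right] at hc
  exact absurd hc (lt_asymm (lt_mk_succ i h))

lemma adj_vu_not_mem {π σ τ : Enum N} {i : Fin (Fintype.card N)}
    {h : (i : ℕ) + 1 < Fintype.card N} (hA : AdjTranspAt π σ i h) :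
    (π ⟨(i : ℕ) + 1, h⟩, π i) ∉ invP π τ := by
  rw [mem_invP]
  rintro ⟨hc, -⟩
  simp only [Equiv.symm_apply_apply] at hc
  exact absurd hc (lt_asymm (lt_mk_succ i h))

lemma card_invP_le_adj {π σ τ : Enum N} (hA : AdjTransp π σ) :
    (invP σ τ).card ≤ (invP π τ).card + 1 := by
  obtain ⟨i, h, hA⟩ := hA
  have hsub : invP σ τ ⊆ insert (π ⟨(i : ℕ) + 1, h⟩, π i) (invP π τ) := by
    intro p hp
    rcases eq_or_ne p (π ⟨(i : ℕ) + 1, h⟩, π i) with rfl | h2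
    · exact Finset.mem_insert_self _ _
    · rcases eq_or_ne p (π i, π ⟨(i : ℕ) + 1, h⟩) with rfl | h1
      · exact absurd hp (adj_uv_not_mem hA)
      · exact Finset.mem_insert_of_mem ((adj_mem_iff hA h1 h2).mp hp)
  calc (invP σ τ).card ≤ _ := Finset.card_le_card hsub
    _ ≤ (invP π τ).card + 1 := Finset.card_insert_le _ _

lemma adj_erase_eq {π σ τ : Enum N} {i : Fin (Fintype.card N)}
    {h : (i : ℕ) + 1 < Fintype.card N} (hA : AdjTranspAt π σ i h)
    (hdesc : τ.symm (π ⟨(i : ℕ) + 1, h⟩) < τ.symm (π i)) :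
    invP σ τ = (invP π τ).erase (π i, π ⟨(i : ℕ) + 1, h⟩) ∧
      (π i, π ⟨(i : ℕ) + 1, h⟩) ∈ invP π τ := by
  have hmem : (π i, π ⟨(i : ℕ) + 1, h⟩) ∈ invP π τ := by
    rw [mem_invP]
    refine ⟨?_, hdesc⟩
    simp only [Equiv.symm_apply_apply]
    exact lt_mk_succ i h
  refine ⟨?_, hmem⟩
  ext p
  rw [Finset.mem_erase]
  rcases eq_or_ne p (π i, π ⟨(i : ℕ) + 1, h⟩) with rfl | h1
  · simp [adj_uv_not_mem hA]
  rcases eq_or_ne p (π ⟨(i : ℕ) + 1, h⟩, π i) with rfl | h2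
  · constructor
    · intro hc
      exfalso
      rw [mem_invP] at hc
      exact absurd hc.2 (lt_asymm hdesc)
    · rintro ⟨-, hc⟩
      exact absurd hc (adj_vu_not_mem hA)
  · rw [adj_mem_iff hA h1 h2]
    simp [h1]

lemma invP_card_le_walk_length : ∀ {π σ : Enum N} (w : (permGraph N).Walk π σ),
    (invP π σ).card ≤ w.length := by
  intro π σ w
  induction w with
  | nil => simp [invP_self]
  | @cons a b c hadj p ih =>
    have h1 : (invP a c).card ≤ (invP b c).card + 1 :=
      card_invP_le_adj hadj.symm
    simp only [SimpleGraph.Walk.length_cons]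
    omega

/-- A strictly monotone self-equivalence of `Fin n` is the identity. -/
lemma strictMono_equiv_eq_refl {n : ℕ} (e : Fin n ≃ Fin n) (he : StrictMono e) :
    ∀ x, e x = x := by
  have hrange : Set.range e = Set.range (id : Fin n → Fin n) := by
    rw [Set.range_id]
    exact Set.range_eq_univ.mpr e.surjective
  haveI : WellFoundedLT (Fin n) := inferInstance
  have heid : ⇑e = (id : Fin n → Fin n) :=
    (StrictMono.range_inj he strictMono_id).mp hrange
  intro x; exact congrFun heid x

lemma invP_empty_eq {π σ : Enum N} (h : invP π σ = ∅) : π = σ := by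
  have hmono : StrictMono (π.trans σ.symm) := by
    intro x y hxy
    simp only [Equiv.trans_apply]
    rcases lt_trichotomy (σ.symm (π x)) (σ.symm (π y)) with hlt | heq | hgt
    · exact hlt
    · exact absurd (σ.symm.injective heq) (fun hc => absurd (π.injective hc) (ne_of_lt hxy))
    · exfalso
      have hm : (π x, π y) ∈ invP π σ := by
        rw [mem_invP]
        simp only [Equiv.symm_apply_apply]
        exact ⟨hxy, hgt⟩
      rw [h] at hm
      exact absurd hm (Finset.notMem_empty _)
  have hid := strictMono_equiv_eq_refl _ hmono
  ext x
  have hx := hid x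
  simp only [Equiv.trans_apply] at hx
  exact (σ.eq_symm_apply.mp hx.symm).symm

/-- If there is any inversion, there is an adjacent descent. -/
lemma exists_descent {π σ : Enum N} (h : invP π σ ≠ ∅) :
    ∃ (i : Fin (Fintype.card N)) (hi : (i : ℕ) + 1 < Fintype.card N),
      σ.symm (π ⟨(i : ℕ) + 1, hi⟩) < σ.symm (π i) := by
  by_contra hc
  push_neg at hc
  apply h
  have hstep : ∀ (i : Fin (Fintype.card N)) (hi : (i : ℕ) + 1 < Fintype.card N),
      σ.symm (π i) < σ.symm (π ⟨(i : ℕ) + 1, hi⟩) := by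
    intro i hi
    rcases lt_or_eq_of_le (hc i hi) with hlt | heq
    · exact hlt
    · exfalso
      have := π.injective (σ.symm.injective heq)
      have := congrArg Fin.val this
      simp at this
  have key : ∀ (j : ℕ) (hj : j < Fintype.card N) (x : Fin (Fintype.card N)),
      (x : ℕ) < j → σ.symm (π x) < σ.symm (π ⟨j, hj⟩) := by
    intro j
    induction j with
    | zero => intro hj x hx; omega
    | succ j ihj =>
      intro hj x hx
      have hj' : j < Fintype.card N := by omega
      have hs : σ.symm (π ⟨j, hj'⟩) < σ.symm (π ⟨j + 1, hj⟩) := hstep ⟨j, hj'⟩ hj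
      rcases Nat.lt_or_ge (x : ℕ) j with hlt | hge
      · exact (ihj hj' x hlt).trans hs
      · have hxj : x = ⟨j, hj'⟩ := Fin.ext (show (x : ℕ) = j by omega)
        rw [hxj]; exact hs
  have hmono : StrictMono (fun x => σ.symm (π x)) := by
    intro x y hxy
    have hk := key (y : ℕ) y.isLt x (Fin.lt_def.mp hxy)
    have hy : (⟨(y : ℕ), y.isLt⟩ : Fin (Fintype.card N)) = y := rfl
    rw [hy] at hk
    exact hk
  ext p
  simp only [mem_invP, Finset.notMem_empty, iff_false, not_and]
  intro hp
  have := hmono hp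
  simp only [Equiv.apply_symm_apply] at this
  exact not_lt.mpr (le_of_lt this)

lemma adjTranspAt_swap (π : Enum N) (i : Fin (Fintype.card N))
    (h : (i : ℕ) + 1 < Fintype.card N) :
    AdjTranspAt π ((Equiv.swap i ⟨(i : ℕ) + 1, h⟩).trans π) i h := by
  refine ⟨?_, ?_, ?_⟩
  · simp [Equiv.swap_apply_right]
  · simp [Equiv.swap_apply_left]
  · intro k hk hk'
    simp [Equiv.swap_apply_of_ne_of_ne hk hk']

lemma exists_walk_invP (d : ℕ) : ∀ (π σ : Enum N), (invP π σ).card = d →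
    ∃ w : (permGraph N).Walk π σ, w.length = d := by
  induction d with
  | zero =>
    intro π σ hcard
    have h0 : invP π σ = ∅ := Finset.card_eq_zero.mp hcard
    have := invP_empty_eq h0
    subst this
    exact ⟨SimpleGraph.Walk.nil, rfl⟩
  | succ d ih =>
    intro π σ hcard
    have hne : invP π σ ≠ ∅ := by
      intro hc; rw [hc] at hcard; simp at hcard
    obtain ⟨i, hi, hdesc⟩ := exists_descent hne
    have hAdjAt : AdjTranspAt π ((Equiv.swap i ⟨(i : ℕ) + 1, hi⟩).trans π) i hi :=
      adjTranspAt_swap π i hi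
    obtain ⟨herase, hmem⟩ := adj_erase_eq hAdjAt hdesc
    have hcard' : (invP ((Equiv.swap i ⟨(i : ℕ) + 1, hi⟩).trans π) σ).card = d := by
      rw [herase, Finset.card_erase_of_mem hmem, hcard]; omega
    obtain ⟨w, hw⟩ := ih _ σ hcard'
    exact ⟨SimpleGraph.Walk.cons (show (permGraph N).Adj π _ from ⟨i, hi, hAdjAt⟩) w, by simp [hw]⟩

lemma dist_eq_card_invP (π σ : Enum N) :
    (permGraph N).dist π σ = (invP π σ).card := by
  obtain ⟨w, hw⟩ := exists_walk_invP (invP π σ).card π σ rfl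
  have hle : (permGraph N).dist π σ ≤ (invP π σ).card := hw ▸ SimpleGraph.dist_le w
  have hreach : (permGraph N).Reachable π σ := ⟨w⟩
  obtain ⟨w', hw'⟩ := hreach.exists_walk_length_eq_dist
  have := invP_card_le_walk_length w'
  omega

lemma invP_disjoint (π τ σ : Enum N) : Disjoint (invP π τ) (invP τ σ) := by
  rw [Finset.disjoint_left]
  intro p hp hq
  rw [mem_invP] at hp hq
  exact absurd (hp.2.trans hq.1) (lt_irrefl _)

lemma invP_subset_union (π τ σ : Enum N) : invP π σ ⊆ invP π τ ∪ invP τ σ := by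
  intro p hp
  rw [mem_invP] at hp
  rcases lt_trichotomy (τ.symm p.2) (τ.symm p.1) with hlt | heq | hgt
  · exact Finset.mem_union_left _ (mem_invP.mpr ⟨hp.1, hlt⟩)
  · exfalso
    have h12 := τ.symm.injective heq
    rw [h12] at hp
    exact absurd hp.1 (lt_irrefl _)
  · exact Finset.mem_union_right _ (mem_invP.mpr ⟨hgt, hp.2⟩)

/-- On a geodesic: inversions of the first leg are inversions of the whole. -/
lemma geodesic_invP_subset {π τ σ : Enum N}
    (hgeo : (permGraph N).dist π τ + (permGraph N).dist τ σ = (permGraph N).dist π σ) :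
    invP π τ ⊆ invP π σ := by
  rw [dist_eq_card_invP, dist_eq_card_invP, dist_eq_card_invP] at hgeo
  have hcard : (invP π τ ∪ invP τ σ).card = (invP π σ).card := by
    rw [Finset.card_union_of_disjoint (invP_disjoint π τ σ)]; exact hgeo
  have heq := Finset.eq_of_subset_of_card_le (invP_subset_union π τ σ) (le_of_eq hcard)
  rw [heq]
  exact Finset.subset_union_left

end Aux


/-- **Main theorem.** For `|N| ≥ 2` and a set `S` of enumerations of `N`:
`S` is geodetically convex in the permutohedral graph iff either `S = ∅` or `S = L(P)`
for some poset `P` on `N`. -/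
theorem stmt8 {N : Type*} [Fintype N] (h2 : 2 ≤ Fintype.card N) (S : Set (Enum N)) :
    GeodConvex S ↔ (S = ∅ ∨ ∃ P : Set (N × N), IsPosetOn P ∧ S = LinExt P) := by
  classical
  constructor
  · intro hconv
    rcases S.eq_empty_or_nonempty with rfl | ⟨π0, hπ0⟩
    · exact Or.inl rfl
    right
    refine ⟨{p : N × N | ∀ π ∈ S, π.symm p.1 ≤ π.symm p.2}, ⟨?_, ?_, ?_⟩, ?_⟩
    · intro u π _; exact le_refl _
    · intro u v h1 h2'
      have := le_antisymm (h1 π0 hπ0) (h2' π0 hπ0)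
      exact π0.symm.injective this
    · intro u v w h1 h2'
      intro π hπ; exact (h1 π hπ).trans (h2' π hπ)
    · ext τ
      constructor
      · intro hτ p hp
        exact hp τ hτ
      · intro hτ
        have key : ∀ d (π : Enum N), π ∈ S → (invP π τ).card = d → τ ∈ S := by
          intro d
          induction d with
          | zero =>
            intro π hπ hcard
            have : invP π τ = ∅ := Finset.card_eq_zero.mp hcard
            exact invP_empty_eq this ▸ hπ
          | succ d ih =>
            intro π hπ hcard
            have hne : invP π τ ≠ ∅ := by
              intro hc; rw [hc] at hcard; simp at hcard
            obtain ⟨i, hi, hdesc⟩ := exists_descent hne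
            set u := π i with hu
            set v := π ⟨(i : ℕ) + 1, hi⟩ with hv
            set π' : Enum N := (Equiv.swap i ⟨(i : ℕ) + 1, hi⟩).trans π with hπ'def
            have hAdjAt : AdjTranspAt π π' i hi := adjTranspAt_swap π i hi
            obtain ⟨herase, hmem⟩ := adj_erase_eq hAdjAt hdesc
            -- (u, v) is not in P, so some σ ∈ S reverses it
            have hnotP : ¬ (∀ ρ ∈ S, ρ.symm u ≤ ρ.symm v) := by
              intro hc
              have := hτ (u, v) hc
              exact absurd hdesc (not_lt.mpr this)
            push_neg at hnotP
            obtain ⟨σ, hσS, hσ⟩ := hnotP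
            have hσlt : σ.symm v < σ.symm u := hσ
            -- invP π π' = {(u,v)}
            have hsingle : invP π π' = {(u, v)} := by
              have hdesc' : π'.symm v < π'.symm u := by
                rw [adj_symm_apply hAdjAt, adj_symm_apply hAdjAt, hu, hv]
                simp [Equiv.swap_apply_left, Equiv.swap_apply_right, Fin.lt_def]
              obtain ⟨he, hm⟩ := adj_erase_eq hAdjAt hdesc'
              rw [invP_self] at he
              rcases (Finset.erase_eq_empty_iff _ _).mp he.symm with hc | hc
              · rw [hc] at hm; simp at hm
              · exact hc
            -- invP π' σ = (invP π σ).erase (u,v), with (u,v) ∈ invP π σ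
            obtain ⟨heraseσ, hmemσ⟩ := adj_erase_eq hAdjAt hσlt
            -- geodesic condition
            have hgeo : (permGraph N).dist π π' + (permGraph N).dist π' σ
                = (permGraph N).dist π σ := by
              rw [dist_eq_card_invP, dist_eq_card_invP, dist_eq_card_invP,
                hsingle, heraseσ, Finset.card_erase_of_mem hmemσ, Finset.card_singleton]
              have : 1 ≤ (invP π σ).card := Finset.card_pos.mpr ⟨_, hmemσ⟩
              omega
            have hπ'S : π' ∈ S := hconv π hπ σ hσS π' hgeo
            have hcard' : (invP π' τ).card = d := by
              rw [herase, Finset.card_erase_of_mem hmem, hcard]; omega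
            exact ih π' hπ'S hcard'
        exact key (invP π0 τ).card π0 hπ0 rfl
  · rintro (rfl | ⟨P, hP, rfl⟩)
    · intro π hπ; exact absurd hπ (Set.notMem_empty π)
    · intro π hπ σ hσ τ hgeo
      intro p hp
      by_contra hc
      have hlt : τ.symm p.2 < τ.symm p.1 := not_le.mp hc
      have hne : p.1 ≠ p.2 := by
        intro h; rw [h] at hlt; exact absurd hlt (lt_irrefl _)
      have hπle : π.symm p.1 ≤ π.symm p.2 := hπ p hp
      have hπlt : π.symm p.1 < π.symm p.2 :=
        lt_of_le_of_ne hπle (fun h => hne (π.symm.injective h))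
      have : p ∈ invP π τ := mem_invP.mpr ⟨hπlt, hlt⟩
      have hmem := geodesic_invP_subset hgeo this
      rw [mem_invP] at hmem
      exact absurd hmem.2 (not_lt.mpr (hσ p hp))
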